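/- Let C be a symmetric monoidal category in which the tensor product preserves reflexive coequalizers in each variable. Suppose given commutative algebras A₁, A₂, A₃ in C and algebra homomorphisms f, g : A₁ → A₂ and k : A₂ → A₃ whose underlying morphisms form a reflexive coequalizer in C. Let M₁ be an A₁-module, M₂ an A₂-module, and let φ : M₁ → f*(M₂) and γ : M₁ → g*(M₂) be A₁-linear, where f*(M₂) and g*(M₂) denote M₂ with the A₁-actions induced by f and g respectively. Suppose φ, γ : M₁ ⇉ M₂ together with κ : M₂ → M₃ form a reflexive coequalizer in C. Then there is a unique A₃-module structure on M₃ such that κ : M₂ → k*(M₃) is A₂-linear. -/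

import Mathlib

open CategoryTheory CategoryTheory.Limits CategoryTheory.MonoidalCategory

universe v u

namespace CodiffPaper

/-- A category enriched in commutative monoids: each hom-set is a commutative
monoid and composition is biadditive (and preserves zero). -/
class CMonEnriched (C : Type u) [Category.{v} C] where
  [homMonoid : ∀ X Y : C, AddCommMonoid (X ⟶ Y)]
  add_comp : ∀ {X Y Z : C} (f g : X ⟶ Y) (h : Y ⟶ Z), (f + g) ≫ h = f ≫ h + g ≫ h
  comp_add : ∀ {X Y Z : C} (f : X ⟶ Y) (g h : Y ⟶ Z), f ≫ (g + h) = f ≫ g + f ≫ h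
  zero_comp : ∀ {X Y Z : C} (f : Y ⟶ Z), (0 : X ⟶ Y) ≫ f = (0 : X ⟶ Z)
  comp_zero : ∀ {X Y Z : C} (f : X ⟶ Y), f ≫ (0 : Y ⟶ Z) = (0 : X ⟶ Z)

attribute [instance] CMonEnriched.homMonoid

instance (priority := 100) CMonEnriched.toHasZeroMorphisms
    (C : Type u) [Category.{v} C] [CMonEnriched C] : HasZeroMorphisms C where
  zero X Y := inferInstance
  comp_zero := fun {X Y} f Z => CMonEnriched.comp_zero f
  zero_comp := fun X {Y Z} f => CMonEnriched.zero_comp f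

/-- An additive symmetric monoidal category: commutative-monoid enriched, and
the tensor product is additive in each variable. -/
class AdditiveMonoidal (C : Type u) [Category.{v} C] [MonoidalCategory C] extends
    CMonEnriched C where
  add_tensorHom : ∀ {X Y Z W : C} (f g : X ⟶ Y) (h : Z ⟶ W),
    (f + g) ⊗ₘ h = (f ⊗ₘ h) + (g ⊗ₘ h)
  tensorHom_add : ∀ {X Y Z W : C} (f : X ⟶ Y) (g h : Z ⟶ W),
    f ⊗ₘ (g + h) = (f ⊗ₘ g) + (f ⊗ₘ h)
  zero_tensorHom : ∀ {X Y Z W : C} (h : Z ⟶ W), (0 : X ⟶ Y) ⊗ₘ h = 0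
  tensorHom_zero : ∀ {X Y Z W : C} (f : X ⟶ Y), f ⊗ₘ (0 : Z ⟶ W) = 0

variable {C : Type u} [Category.{v} C]

/-- `π : Y ⟶ Q` is a coequalizer of `f` and `g` (elementwise formulation). -/
def IsCoeq {X Y Q : C} (f g : X ⟶ Y) (π : Y ⟶ Q) : Prop :=
  f ≫ π = g ≫ π ∧ ∀ {Z : C} (h : Y ⟶ Z), f ≫ h = g ≫ h → ∃! t : Q ⟶ Z, π ≫ t = h

/-- The tensor product preserves reflexive coequalizers in each variable. -/
def TensorPreservesReflCoeq (C : Type u) [Category.{v} C] [MonoidalCategory C] : Prop :=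
  ∀ {X Y Q : C} (f g : X ⟶ Y) (s : Y ⟶ X) (π : Y ⟶ Q),
    s ≫ f = 𝟙 Y → s ≫ g = 𝟙 Y → IsCoeq f g π →
      ∀ Z : C, IsCoeq (Z ◁ f) (Z ◁ g) (Z ◁ π) ∧ IsCoeq (f ▷ Z) (g ▷ Z) (π ▷ Z)

section Monoidal

variable [MonoidalCategory C]

/-- A commutative algebra (commutative monoid object) structure. -/
structure IsCommAlg [SymmetricCategory C] {A : C} (mul : A ⊗ A ⟶ A) (unit : 𝟙_ C ⟶ A) : Prop where
  one_mul : (unit ▷ A) ≫ mul = (λ_ A).hom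
  mul_one : (A ◁ unit) ≫ mul = (ρ_ A).hom
  mul_assoc : (mul ▷ A) ≫ mul = (α_ A A A).hom ≫ (A ◁ mul) ≫ mul
  mul_comm : (β_ A A).hom ≫ mul = mul

/-- `f : A ⟶ B` is a homomorphism of algebras. -/
structure IsAlgHom {A B : C} (mulA : A ⊗ A ⟶ A) (unitA : 𝟙_ C ⟶ A)
    (mulB : B ⊗ B ⟶ B) (unitB : 𝟙_ C ⟶ B) (f : A ⟶ B) : Prop where
  map_mul : (f ⊗ₘ f) ≫ mulB = mulA ≫ f
  map_one : unitA ≫ f = unitB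

/-- `act : A ⊗ M ⟶ M` is a module structure on `M` over the algebra `(A, mulA, unitA)`. -/
structure IsModule {A M : C} (mulA : A ⊗ A ⟶ A) (unitA : 𝟙_ C ⟶ A)
    (act : A ⊗ M ⟶ M) : Prop where
  one_act : (unitA ▷ M) ≫ act = (λ_ M).hom
  mul_act : (mulA ▷ M) ≫ act = (α_ A A M).hom ≫ (A ◁ act) ≫ act

/-- A morphism of modules over `A` (a linear map). -/
def IsModuleMap {A M N : C} (actM : A ⊗ M ⟶ M) (actN : A ⊗ N ⟶ N) (h : M ⟶ N) : Prop :=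
  actM ≫ h = (A ◁ h) ≫ actN

/-- The free `A`-module structure on `A ⊗ X`. -/
def freeAct {A : C} (mulA : A ⊗ A ⟶ A) (X : C) : A ⊗ (A ⊗ X) ⟶ A ⊗ X :=
  (α_ A A X).inv ≫ (mulA ▷ X)

/-- `der : A ⟶ M` is a derivation from the algebra `(A, mulA, unitA)` to the module
`(M, act)`:  `m;der = c;(1⊗der);• + (1⊗der);•` and `e;der = 0`. -/
def IsDerivation [SymmetricCategory C] [CMonEnriched C] {A M : C}
    (mulA : A ⊗ A ⟶ A) (unitA : 𝟙_ C ⟶ A) (act : A ⊗ M ⟶ M) (der : A ⟶ M) : Prop :=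
  (mulA ≫ der = (β_ A A).hom ≫ (A ◁ der) ≫ act + (A ◁ der) ≫ act) ∧ unitA ≫ der = 0

variable [SymmetricCategory C]

/-- An algebra modality: each `T X` is naturally a commutative algebra. -/
structure IsAlgebraModality (T : Monad C)
    (mul : ∀ X : C, T.obj X ⊗ T.obj X ⟶ T.obj X)
    (unit : ∀ X : C, 𝟙_ C ⟶ T.obj X) : Prop where
  commAlg : ∀ X : C, IsCommAlg (mul X) (unit X)
  map_hom : ∀ {X Y : C} (f : X ⟶ Y),
    IsAlgHom (mul X) (unit X) (mul Y) (unit Y) (T.map f)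
  mu_hom : ∀ X : C,
    IsAlgHom (mul (T.obj X)) (unit (T.obj X)) (mul X) (unit X) (T.μ.app X)

/-- A (bundled) algebra modality on `C`. -/
structure AlgebraModality (C : Type u) [Category.{v} C] [MonoidalCategory C]
    [SymmetricCategory C] where
  T : Monad C
  mul : ∀ X : C, T.obj X ⊗ T.obj X ⟶ T.obj X
  unit : ∀ X : C, 𝟙_ C ⟶ T.obj X
  ismod : IsAlgebraModality T mul unit

/-- The multiplication of the commutative algebra induced on a `T`-algebra. -/
def algMul (Φ : AlgebraModality C) (A : Φ.T.Algebra) : A.A ⊗ A.A ⟶ A.A :=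
  (Φ.T.η.app A.A ⊗ₘ Φ.T.η.app A.A) ≫ Φ.mul A.A ≫ A.a

/-- The unit of the commutative algebra induced on a `T`-algebra. -/
def algUnit (Φ : AlgebraModality C) (A : Φ.T.Algebra) : 𝟙_ C ⟶ A.A :=
  Φ.unit A.A ≫ A.a

/-- `f : A ⟶ B` is a homomorphism of `T`-algebras (elementwise formulation). -/
def IsTAlgebraHom (T : Monad C) {A B : C} (νA : T.obj A ⟶ A) (νB : T.obj B ⟶ B)
    (f : A ⟶ B) : Prop :=
  T.map f ≫ νB = νA ≫ f

/-- `b : T X ⟶ X` is a `T`-algebra structure map. -/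
def IsTAlgStr (T : Monad C) {X : C} (b : T.obj X ⟶ X) : Prop :=
  (T.η.app X ≫ b = 𝟙 X) ∧ (T.μ.app X ≫ b = T.map b ≫ b)

variable [AdditiveMonoidal C]

/-- The axioms for a codifferential category on an additive symmetric monoidal
category: an algebra modality together with a deriving transform satisfying
(d1)–(d4). -/
structure IsCodifferential (T : Monad C)
    (mul : ∀ X : C, T.obj X ⊗ T.obj X ⟶ T.obj X)
    (unit : ∀ X : C, 𝟙_ C ⟶ T.obj X)
    (d : ∀ X : C, T.obj X ⟶ T.obj X ⊗ X) : Prop where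
  ismod : IsAlgebraModality T mul unit
  d_natural : ∀ {X Y : C} (f : X ⟶ Y), T.map f ≫ d Y = d X ≫ (T.map f ⊗ₘ f)
  d1 : ∀ X : C, unit X ≫ d X = 0
  d2 : ∀ X : C, mul X ≫ d X =
    (T.obj X ◁ d X) ≫ (α_ (T.obj X) (T.obj X) X).inv ≫ (mul X ▷ X)
    + (d X ▷ T.obj X) ≫ (α_ (T.obj X) X (T.obj X)).hom ≫
        (T.obj X ◁ (β_ X (T.obj X)).hom) ≫ (α_ (T.obj X) (T.obj X) X).inv ≫ (mul X ▷ X)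
  d3 : ∀ X : C, T.η.app X ≫ d X = (λ_ X).inv ≫ (unit X ▷ X)
  d4 : ∀ X : C, T.μ.app X ≫ d X =
    d (T.obj X) ≫ (T.μ.app X ⊗ₘ d X) ≫ (α_ (T.obj X) (T.obj X) X).inv ≫ (mul X ▷ X)

/-- A (bundled) codifferential category structure on `C`. -/
structure Codifferential (C : Type u) [Category.{v} C] [MonoidalCategory C]
    [SymmetricCategory C] [AdditiveMonoidal C] extends AlgebraModality C where
  d : ∀ X : C, T.obj X ⟶ T.obj X ⊗ X
  iscodiff : IsCodifferential T mul unit d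

section Biproducts

variable [HasBinaryBiproducts C]

/-- The second component of the structure map of `W(A,M)`:
`β₂ = d;(Tπ₁ ⊗ π₂);(ν ⊗ 1);•`. -/
noncomputable def Wbeta2 (D : Codifferential C) (A : D.T.Algebra) {M : C} (act : A.A ⊗ M ⟶ M) :
    D.T.obj (A.A ⊞ M) ⟶ M :=
  D.d (A.A ⊞ M) ≫ (D.T.map biprod.fst ⊗ₘ biprod.snd) ≫ (A.a ⊗ₘ 𝟙 M) ≫ act

/-- The structure map `β = ⟨β₁, β₂⟩ : T(A ⊕ M) ⟶ A ⊕ M` of `W(A,M)`. -/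
noncomputable def Wbeta (D : Codifferential C) (A : D.T.Algebra) {M : C} (act : A.A ⊗ M ⟶ M) :
    D.T.obj (A.A ⊞ M) ⟶ A.A ⊞ M :=
  biprod.lift (D.T.map biprod.fst ≫ A.a) (Wbeta2 D A act)

end Biproducts

/-- A Kähler category: an additive symmetric monoidal category with an algebra
modality such that every algebra `T X` has a module of Kähler differentials. -/
structure KahlerCategory (C : Type u) [Category.{v} C] [MonoidalCategory C]
    [SymmetricCategory C] [AdditiveMonoidal C] extends AlgebraModality C where
  Ω : C → C
  act : ∀ X : C, T.obj X ⊗ Ω X ⟶ Ω X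
  ismodule : ∀ X : C, IsModule (mul X) (unit X) (act X)
  dK : ∀ X : C, T.obj X ⟶ Ω X
  isder : ∀ X : C, IsDerivation (mul X) (unit X) (act X) (dK X)
  universal : ∀ (X : C) {M : C} (actM : T.obj X ⊗ M ⟶ M),
    IsModule (mul X) (unit X) actM →
    ∀ der : T.obj X ⟶ M, IsDerivation (mul X) (unit X) actM der →
      ∃! h : Ω X ⟶ M, IsModuleMap (act X) actM h ∧ dK X ≫ h = der

end Monoidal

/-!
Because `⊗` preserves reflexive coequalizers in each variable, `k ⊗ κ : A₂ ⊗ M₂ ⟶ A₃ ⊗ M₃` is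
the quotient of `A₂ ⊗ M₂` by the relations `f ▷ M₂ ∼ g ▷ M₂` and `A₂ ◁ φ ∼ A₂ ◁ γ`. The map
`act₂ ≫ κ` respects both: `φ` and `γ` are linear and split by `t`, so `f ▷ M₂ ≫ act₂` and
`g ▷ M₂ ≫ act₂` are `(A₁ ◁ t) ≫ act₁` followed by `φ`, resp. `γ`, which `κ` identifies; and
`s` turns `A₂ ◁ φ ≫ act₂` into `(s ▷ M₁) ≫ act₁ ≫ φ`. Hence `act₂ ≫ κ` descends uniquely to
`act₃`, and the module axioms for `act₃` follow from those of `act₂` by cancelling the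
epimorphisms `𝟙_ C ◁ κ` and `(k ⊗ k) ⊗ κ`.
-/

theorem IsCoeq.epi {X Y Q : C} {f g : X ⟶ Y} {π : Y ⟶ Q} (h : IsCoeq f g π) : Epi π where
  left_cancellation a b hab := by
    obtain ⟨_, _, huniq⟩ := h.2 (π ≫ a) (by rw [reassoc_of% h.1])
    exact (huniq a rfl).trans (huniq b hab.symm).symm

structure IsReflCoeq {X Y Q : C} (f g : X ⟶ Y) (π : Y ⟶ Q) : Prop where
  exists_section : ∃ s : Y ⟶ X, s ≫ f = 𝟙 Y ∧ s ≫ g = 𝟙 Y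
  isCoeq : IsCoeq f g π

section Monoidal

variable [MonoidalCategory C] {X Y Q : C} {f g : X ⟶ Y} {π : Y ⟶ Q}

theorem IsReflCoeq.whiskerLeft (hpres : TensorPreservesReflCoeq C) (h : IsReflCoeq f g π)
    (Z : C) : IsReflCoeq (Z ◁ f) (Z ◁ g) (Z ◁ π) := by
  obtain ⟨⟨s, hsf, hsg⟩, hπ⟩ := h
  refine ⟨⟨Z ◁ s, ?_, ?_⟩, (hpres f g s π hsf hsg hπ Z).1⟩ <;>
    simp only [← whiskerLeft_comp, hsf, hsg, whiskerLeft_id]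

theorem IsReflCoeq.whiskerRight (hpres : TensorPreservesReflCoeq C) (h : IsReflCoeq f g π)
    (Z : C) : IsReflCoeq (f ▷ Z) (g ▷ Z) (π ▷ Z) := by
  obtain ⟨⟨s, hsf, hsg⟩, hπ⟩ := h
  refine ⟨⟨s ▷ Z, ?_, ?_⟩, (hpres f g s π hsf hsg hπ Z).2⟩ <;>
    simp only [← comp_whiskerRight, hsf, hsg, id_whiskerRight]

theorem IsReflCoeq.epi_tensorHom_tensorHom (hpres : TensorPreservesReflCoeq C)
    {X₁ Y₁ Q₁ X₂ Y₂ Q₂ X₃ Y₃ Q₃ : C} {f₁ g₁ : X₁ ⟶ Y₁} {π₁ : Y₁ ⟶ Q₁}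
    {f₂ g₂ : X₂ ⟶ Y₂} {π₂ : Y₂ ⟶ Q₂} {f₃ g₃ : X₃ ⟶ Y₃} {π₃ : Y₃ ⟶ Q₃}
    (h₁ : IsReflCoeq f₁ g₁ π₁) (h₂ : IsReflCoeq f₂ g₂ π₂) (h₃ : IsReflCoeq f₃ g₃ π₃) :
    Epi ((π₁ ⊗ₘ π₂) ⊗ₘ π₃) := by
  have := ((h₁.whiskerRight hpres Y₂).whiskerRight hpres Y₃).isCoeq.epi
  have := ((h₂.whiskerLeft hpres Q₁).whiskerRight hpres Y₃).isCoeq.epi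
  have := (h₃.whiskerLeft hpres (Q₁ ⊗ Q₂)).isCoeq.epi
  rw [tensorHom_def (π₁ ⊗ₘ π₂), tensorHom_def π₁ π₂, comp_whiskerRight]
  infer_instance

theorem IsReflCoeq.existsUnique_tensorHom_comp (hpres : TensorPreservesReflCoeq C)
    {A₁ A₂ A₃ M₁ M₂ M₃ Z : C} {f g : A₁ ⟶ A₂} {k : A₂ ⟶ A₃} {φ γ : M₁ ⟶ M₂} {κ : M₂ ⟶ M₃}
    (hA : IsReflCoeq f g k) (hM : IsReflCoeq φ γ κ) (h : A₂ ⊗ M₂ ⟶ Z)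
    (hfg : (f ▷ M₂) ≫ h = (g ▷ M₂) ≫ h) (hφγ : (A₂ ◁ φ) ≫ h = (A₂ ◁ γ) ≫ h) :
    ∃! t : A₃ ⊗ M₃ ⟶ Z, (k ⊗ₘ κ) ≫ t = h := by
  obtain ⟨u, hu, hu_uniq⟩ := (hM.whiskerLeft hpres A₂).isCoeq.2 h hφγ
  have := (hM.whiskerLeft hpres A₁).isCoeq.epi
  have hu_fg : (f ▷ M₃) ≫ u = (g ▷ M₃) ≫ u := by
    rw [← cancel_epi (A₁ ◁ κ), whisker_exchange_assoc, whisker_exchange_assoc, hu, hfg]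
  obtain ⟨t, ht, ht_uniq⟩ := (hA.whiskerRight hpres M₃).isCoeq.2 u hu_fg
  refine ⟨t, ?_, fun t' (ht' : (k ⊗ₘ κ) ≫ t' = h) => ht_uniq t' (hu_uniq _ ?_)⟩
  · simp only [tensorHom_def'_assoc, ht, hu]
  · simpa only [tensorHom_def'_assoc] using ht'

theorem IsModuleMap.act_eq_of_section {A M N : C} {actM : A ⊗ M ⟶ M} {actN : A ⊗ N ⟶ N}
    {h : M ⟶ N} (hh : IsModuleMap actM actN h) {t : N ⟶ M} (ht : t ≫ h = 𝟙 N) :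
    actN = (A ◁ t) ≫ actM ≫ h := by
  rw [hh, ← whiskerLeft_comp_assoc, ht, whiskerLeft_id, Category.id_comp]

theorem IsModuleMap.whiskerLeft_comp_act_of_section {A₁ A₂ M N : C} {f : A₁ ⟶ A₂}
    {s : A₂ ⟶ A₁} (hs : s ≫ f = 𝟙 A₂) {actM : A₁ ⊗ M ⟶ M} {actN : A₂ ⊗ N ⟶ N} {h : M ⟶ N}
    (hh : IsModuleMap actM ((f ▷ N) ≫ actN) h) :
    (A₂ ◁ h) ≫ actN = (s ▷ M) ≫ actM ≫ h := by
  rw [hh, whisker_exchange_assoc, ← comp_whiskerRight_assoc, hs, id_whiskerRight,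
    Category.id_comp]

theorem IsModule.of_epi {A₂ A₃ M₂ M₃ : C} {mul₂ : A₂ ⊗ A₂ ⟶ A₂} {one₂ : 𝟙_ C ⟶ A₂}
    {mul₃ : A₃ ⊗ A₃ ⟶ A₃} {one₃ : 𝟙_ C ⟶ A₃} {k : A₂ ⟶ A₃} {κ : M₂ ⟶ M₃}
    {act₂ : A₂ ⊗ M₂ ⟶ M₂} {act₃ : A₃ ⊗ M₃ ⟶ M₃}
    (hk : IsAlgHom mul₂ one₂ mul₃ one₃ k) (hm₂ : IsModule mul₂ one₂ act₂)
    (hlin : act₂ ≫ κ = (k ⊗ₘ κ) ≫ act₃) [Epi (𝟙_ C ◁ κ)] [Epi ((k ⊗ₘ k) ⊗ₘ κ)] :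
    IsModule mul₃ one₃ act₃ where
  one_act := by
    rw [← cancel_epi (𝟙_ C ◁ κ)]
    calc (𝟙_ C ◁ κ) ≫ (one₃ ▷ M₃) ≫ act₃
        = (one₂ ▷ M₂) ≫ (k ⊗ₘ κ) ≫ act₃ := by
          rw [← hk.map_one, ← tensorHom_def'_assoc, whiskerRight_comp_tensorHom_assoc]
      _ = (𝟙_ C ◁ κ) ≫ (λ_ M₃).hom := by
          rw [← hlin, reassoc_of% hm₂.one_act, leftUnitor_naturality]
  mul_act := by
    rw [← cancel_epi ((k ⊗ₘ k) ⊗ₘ κ)]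
    calc ((k ⊗ₘ k) ⊗ₘ κ) ≫ (mul₃ ▷ M₃) ≫ act₃
        = (mul₂ ▷ M₂) ≫ act₂ ≫ κ := by
          rw [hlin, tensorHom_comp_whiskerRight_assoc, hk.map_mul,
            whiskerRight_comp_tensorHom_assoc]
      _ = (α_ A₂ A₂ M₂).hom ≫ (k ⊗ₘ (k ⊗ₘ κ)) ≫ (A₃ ◁ act₃) ≫ act₃ := by
          rw [reassoc_of% hm₂.mul_act, hlin, whiskerLeft_comp_tensorHom_assoc, hlin,
            ← tensorHom_comp_whiskerLeft_assoc]
      _ = ((k ⊗ₘ k) ⊗ₘ κ) ≫ (α_ A₃ A₃ M₃).hom ≫ (A₃ ◁ act₃) ≫ act₃ := by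
          rw [associator_naturality_assoc]

end Monoidal

theorem statement18_general {C : Type u} [Category.{v} C] [MonoidalCategory C]
    (hpres : TensorPreservesReflCoeq C)
    {A₁ A₂ A₃ : C}
    (mul₂ : A₂ ⊗ A₂ ⟶ A₂) (one₂ : 𝟙_ C ⟶ A₂)
    (mul₃ : A₃ ⊗ A₃ ⟶ A₃) (one₃ : 𝟙_ C ⟶ A₃)
    (f g : A₁ ⟶ A₂) (k : A₂ ⟶ A₃)
    (hk : IsAlgHom mul₂ one₂ mul₃ one₃ k)
    (s : A₂ ⟶ A₁) (hsf : s ≫ f = 𝟙 A₂) (hsg : s ≫ g = 𝟙 A₂)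
    (hcoeq : IsCoeq f g k)
    {M₁ M₂ M₃ : C} (act₁ : A₁ ⊗ M₁ ⟶ M₁) (act₂ : A₂ ⊗ M₂ ⟶ M₂)
    (hm₂ : IsModule mul₂ one₂ act₂)
    (φ γ : M₁ ⟶ M₂)
    (hφ : IsModuleMap act₁ ((f ▷ M₂) ≫ act₂) φ)
    (hγ : IsModuleMap act₁ ((g ▷ M₂) ≫ act₂) γ)
    (κ : M₂ ⟶ M₃) (t : M₂ ⟶ M₁) (htφ : t ≫ φ = 𝟙 M₂) (htγ : t ≫ γ = 𝟙 M₂)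
    (hmcoeq : IsCoeq φ γ κ) :
    ∃! act₃ : A₃ ⊗ M₃ ⟶ M₃,
      IsModule mul₃ one₃ act₃ ∧ IsModuleMap act₂ ((k ▷ M₃) ≫ act₃) κ := by
  have hA : IsReflCoeq f g k := ⟨⟨s, hsf, hsg⟩, hcoeq⟩
  have hM : IsReflCoeq φ γ κ := ⟨⟨t, htφ, htγ⟩, hmcoeq⟩
  have hfg : (f ▷ M₂) ≫ act₂ ≫ κ = (g ▷ M₂) ≫ act₂ ≫ κ := by
    rw [reassoc_of% hφ.act_eq_of_section htφ, reassoc_of% hγ.act_eq_of_section htγ, hmcoeq.1]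
  have hφγ : (A₂ ◁ φ) ≫ act₂ ≫ κ = (A₂ ◁ γ) ≫ act₂ ≫ κ := by
    rw [reassoc_of% hφ.whiskerLeft_comp_act_of_section hsf,
      reassoc_of% hγ.whiskerLeft_comp_act_of_section hsg, hmcoeq.1]
  obtain ⟨act₃, hlin, huniq⟩ := hA.existsUnique_tensorHom_comp hpres hM _ hfg hφγ
  have := (hM.whiskerLeft hpres (𝟙_ C)).isCoeq.epi
  have := IsReflCoeq.epi_tensorHom_tensorHom hpres hA hA hM
  simp only [IsModuleMap, ← tensorHom_def'_assoc]
  exact ⟨act₃, ⟨hm₂.of_epi hk hlin.symm, hlin.symm⟩, fun act₃' h => huniq act₃' h.2.symm⟩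

/-- a reflexive coequalizer of algebra maps together with a compatible
reflexive coequalizer of modules induces a unique module structure on the quotient making
the quotient map linear. -/
theorem statement18 {C : Type u} [Category.{v} C] [MonoidalCategory C] [SymmetricCategory C]
    (hpres : TensorPreservesReflCoeq C)
    {A₁ A₂ A₃ : C} (mul₁ : A₁ ⊗ A₁ ⟶ A₁) (one₁ : 𝟙_ C ⟶ A₁)
    (mul₂ : A₂ ⊗ A₂ ⟶ A₂) (one₂ : 𝟙_ C ⟶ A₂)
    (mul₃ : A₃ ⊗ A₃ ⟶ A₃) (one₃ : 𝟙_ C ⟶ A₃)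
    (h₁ : IsCommAlg mul₁ one₁) (h₂ : IsCommAlg mul₂ one₂) (h₃ : IsCommAlg mul₃ one₃)
    (f g : A₁ ⟶ A₂) (k : A₂ ⟶ A₃)
    (hf : IsAlgHom mul₁ one₁ mul₂ one₂ f) (hg : IsAlgHom mul₁ one₁ mul₂ one₂ g)
    (hk : IsAlgHom mul₂ one₂ mul₃ one₃ k)
    (s : A₂ ⟶ A₁) (hsf : s ≫ f = 𝟙 A₂) (hsg : s ≫ g = 𝟙 A₂)
    (hcoeq : IsCoeq f g k)
    {M₁ M₂ M₃ : C} (act₁ : A₁ ⊗ M₁ ⟶ M₁) (act₂ : A₂ ⊗ M₂ ⟶ M₂)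
    (hm₁ : IsModule mul₁ one₁ act₁) (hm₂ : IsModule mul₂ one₂ act₂)
    (φ γ : M₁ ⟶ M₂)
    (hφ : IsModuleMap act₁ ((f ▷ M₂) ≫ act₂) φ)
    (hγ : IsModuleMap act₁ ((g ▷ M₂) ≫ act₂) γ)
    (κ : M₂ ⟶ M₃) (t : M₂ ⟶ M₁) (htφ : t ≫ φ = 𝟙 M₂) (htγ : t ≫ γ = 𝟙 M₂)
    (hmcoeq : IsCoeq φ γ κ) :
    ∃! act₃ : A₃ ⊗ M₃ ⟶ M₃,
      IsModule mul₃ one₃ act₃ ∧ IsModuleMap act₂ ((k ▷ M₃) ≫ act₃) κ :=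
  statement18_general hpres mul₂ one₂ mul₃ one₃ f g k hk s hsf hsg hcoeq act₁ act₂ hm₂ φ γ hφ hγ κ t
    htφ htγ hmcoeq

end CodiffPaper
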